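/- Let (g,[·,·]) be a Lie algebra over K and r : g → g a linear map satisfying the operator form of the classical Yang-Baxter equation [r(x),r(y)] = r([r(x),y] + [x,r(y)]) for all x,y, so that x ·^r y := [r(x),y] defines a pre-Lie algebra structure on g. Let N be a Nijenhuis operator on the Lie algebra (g,[·,·]) with N∘r = r∘N. Then: (i) r satisfies the operator form of the classical Yang-Baxter equation in the deformed Lie algebra (g,[·,·]_N), where [x,y]_N = [N(x),y] + [x,N(y)] − N([x,y]); (ii) N is a Nijenhuis operator on the pre-Lie algebra (g,·^r); (iii) the deformed pre-Lie product satisfies x (·^r)_N y = [r(x),y]_N for all x,y ∈ g. -/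
import Mathlib


variable {K : Type*} [Field K] [CharZero K]
variable {g : Type*} [AddCommGroup g] [Module K g]

/-- The deformed Lie bracket `[x,y]_N = [N x, y] + [x, N y] − N [x,y]`. -/
def lieDeform (br : g →ₗ[K] g →ₗ[K] g) (N : g →ₗ[K] g) (x y : g) : g :=
  br (N x) y + br x (N y) - N (br x y)

/-- Let `r` satisfy the operator form of the classical Yang-Baxter equation on a Lie algebra
`(g, br)`, giving the pre-Lie product `x ·^r y = [r x, y]`, and let `N` be a Nijenhuis
operator on the Lie algebra commuting with `r`. Then:
(i) `r` satisfies the operator CYBE in the deformed Lie algebra `(g, [·,·]_N)`;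
(ii) `N` is a Nijenhuis operator on the pre-Lie algebra `(g, ·^r)`;
(iii) the deformed pre-Lie product satisfies `x (·^r)_N y = [r x, y]_N`. -/
theorem cybe_nijenhuis
    (br : g →ₗ[K] g →ₗ[K] g)
    (hskew : ∀ x y : g, br x y = -br y x)
    (hjac : ∀ x y z : g, br (br x y) z + br (br y z) x + br (br z x) y = 0)
    (r : g →ₗ[K] g)
    (hcybe : ∀ x y : g, br (r x) (r y) = r (br (r x) y + br x (r y)))
    (N : g →ₗ[K] g)
    (hNlie : ∀ x y : g, br (N x) (N y) = N (lieDeform br N x y))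
    (hcomm : N ∘ₗ r = r ∘ₗ N) :
    (∀ x y : g,
      lieDeform br N (r x) (r y)
        = r (lieDeform br N (r x) y + lieDeform br N x (r y))) ∧
    (∀ x y : g,
      br (r (N x)) (N y)
        = N (br (r (N x)) y + br (r x) (N y) - N (br (r x) y))) ∧
    (∀ x y : g,
      br (r (N x)) y + br (r x) (N y) - N (br (r x) y) = lieDeform br N (r x) y) := by
  have hc : ∀ x : g, N (r x) = r (N x) := fun x => LinearMap.congr_fun hcomm x
  refine ⟨?_, ?_, ?_⟩ <;> intro x y
  · simp only [lieDeform, hc, hcybe, map_add, map_sub]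
    abel
  · rw [← hc, hNlie]
    simp [lieDeform, hc]
  · simp [lieDeform, hc]
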